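/- Let w : ℂ → ℂ be a solution of the Airy equation w'' = z·w that is real on the real axis. Suppose α = r·e^{iφ} with r > 0, 0 < φ < π, and w'(α) = 0 and w'(ᾱ) = 0. Then w(0)·w'(0)·sin(2φ) = −r·sin(3φ)·∫₀¹ |w'(αt)|² dt. -/

import Mathlib

open Complex Real

open ComplexConjugate

/-!
With `β = ᾱ`, the Lommel function `L(t) = α² w'(βt) w(αt) − β² w'(αt) w(βt)` of a solution of
`w'' = z w` has `L'(t) = (α³ − β³) w'(βt) w'(αt)`. Integrating over `[0, 1]`: `L(1) = 0` because
`w'(α) = w'(ᾱ) = 0`, `L(0) = (α² − ᾱ²) w(0) w'(0)`, and since `w` commutes with conjugation the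
integrand is `|w'(αt)|²`. With `αⁿ − ᾱⁿ = 2i rⁿ sin(nφ)` it remains to divide by `2i r²`.
-/

lemma deriv_conj_of_map_conj {w : ℂ → ℂ} (hreal : ∀ x, w (conj x) = conj (w x)) (z : ℂ) :
    deriv w (conj z) = conj (deriv w z) := by
  have hw : conj ∘ w ∘ conj = w := funext fun x => by simp [hreal]
  simpa [hw] using congrFun (deriv_conj_conj (f := w)) (conj z)

lemma HasDerivAt.comp_const_mul_ofReal {f : ℂ → ℂ} {f' c : ℂ} {t : ℝ}
    (hf : HasDerivAt f f' (c * t)) : HasDerivAt (fun s : ℝ => f (c * s)) (c * f') t := by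
  simpa [mul_comm] using (hf.comp (t : ℂ) ((hasDerivAt_id _).const_mul c)).comp_ofReal

lemma im_ofReal_mul_exp_mul_I_pow (r φ : ℝ) (n : ℕ) :
    ((r * exp (φ * I)) ^ n).im = r ^ n * Real.sin (n * φ) := by
  rw [mul_pow, ← Complex.exp_nat_mul, ← ofReal_pow]
  have : (n : ℂ) * (φ * I) = ((n * φ : ℝ) : ℂ) * I := by push_cast; ring
  rw [this, im_ofReal_mul, exp_ofReal_mul_I_im]

lemma pow_sub_conj_pow_polar (r φ : ℝ) (n : ℕ) :
    (r * exp (φ * I)) ^ n - conj (r * exp (φ * I)) ^ n = 2 * I * r ^ n * Real.sin (n * φ) := by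
  rw [← map_pow, sub_conj, im_ofReal_mul_exp_mul_I_pow]
  push_cast
  ring

section Lommel

variable {w : ℂ → ℂ}

noncomputable def lommel (w : ℂ → ℂ) (α β : ℂ) (t : ℝ) : ℂ :=
  α ^ 2 * (deriv w (β * t) * w (α * t)) - β ^ 2 * (deriv w (α * t) * w (β * t))

lemma hasDerivAt_lommel (hw : Differentiable ℂ w) (hairy : ∀ z, deriv (deriv w) z = z * w z)
    (α β : ℂ) (t : ℝ) :
    HasDerivAt (lommel w α β) ((α ^ 3 - β ^ 3) * (deriv w (β * t) * deriv w (α * t))) t := by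
  have hW (c : ℂ) : HasDerivAt (fun s : ℝ => w (c * s)) (c * deriv w (c * t)) t :=
    (hw _).hasDerivAt.comp_const_mul_ofReal
  have hD (c : ℂ) : HasDerivAt (fun s : ℝ => deriv w (c * s)) (c * (c * t * w (c * t))) t :=
    hairy (c * t) ▸ (hw.deriv _).hasDerivAt.comp_const_mul_ofReal
  exact ((((hD β).mul (hW α)).const_mul (α ^ 2)).sub
    (((hD α).mul (hW β)).const_mul (β ^ 2))).congr_deriv (by ring)

lemma integral_deriv_mul_deriv (hw : Differentiable ℂ w)
    (hairy : ∀ z, deriv (deriv w) z = z * w z) (α β : ℂ) :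
    (α ^ 3 - β ^ 3) * ∫ t in (0 : ℝ)..1, deriv w (β * t) * deriv w (α * t)
      = lommel w α β 1 - lommel w α β 0 := by
  have hw'_cont := hw.deriv.continuous
  rw [← intervalIntegral.integral_const_mul]
  exact intervalIntegral.integral_eq_sub_of_hasDerivAt (fun t _ => hasDerivAt_lommel hw hairy α β t)
    ((by fun_prop : Continuous _).intervalIntegrable 0 1)

lemma lommel_one_of_deriv_eq_zero {α β : ℂ} (hα : deriv w α = 0) (hβ : deriv w β = 0) :
    lommel w α β 1 = 0 := by
  simp [lommel, hα, hβ]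

lemma lommel_zero (α β : ℂ) : lommel w α β 0 = (α ^ 2 - β ^ 2) * (w 0 * deriv w 0) := by
  simp only [lommel, ofReal_zero, mul_zero]
  ring

lemma integral_deriv_conj_mul_deriv (hreal : ∀ x, w (conj x) = conj (w x)) (α : ℂ) :
    ∫ t in (0 : ℝ)..1, deriv w (conj α * t) * deriv w (α * t)
      = ((∫ t in (0 : ℝ)..1, ‖deriv w (α * t)‖ ^ 2 : ℝ) : ℂ) := by
  rw [← intervalIntegral.integral_ofReal]
  refine intervalIntegral.integral_congr fun t _ => ?_
  have hconj : conj α * t = conj (α * t) := by rw [map_mul, conj_ofReal]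
  rw [hconj, deriv_conj_of_map_conj hreal, conj_mul', ofReal_pow]

lemma lommel_integral_of_deriv_eq_zero (hw : Differentiable ℂ w)
    (hairy : ∀ z, deriv (deriv w) z = z * w z) (hreal : ∀ x, w (conj x) = conj (w x)) {α : ℂ}
    (hα : deriv w α = 0) (hα' : deriv w (conj α) = 0) :
    (α ^ 2 - conj α ^ 2) * (w 0 * deriv w 0)
      = -((α ^ 3 - conj α ^ 3) * ((∫ t in (0 : ℝ)..1, ‖deriv w (α * t)‖ ^ 2 : ℝ) : ℂ)) := by
  rw [← integral_deriv_conj_mul_deriv hreal, integral_deriv_mul_deriv hw hairy,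
    lommel_one_of_deriv_eq_zero hα hα', lommel_zero]
  ring

end Lommel

theorem lommel_integral_deriv_zeros_general (w : ℂ → ℂ)
    (hw : Differentiable ℂ w)
    (hairy : ∀ z : ℂ, deriv (deriv w) z = z * w z)
    (hreal : ∀ x : ℂ, w (starRingEnd ℂ x) = starRingEnd ℂ (w x))
    (r φ : ℝ) (hr : 0 < r)
    (α : ℂ) (hα : α = r * Complex.exp (φ * Complex.I))
    (hz : deriv w α = 0) (hz' : deriv w (starRingEnd ℂ α) = 0) :
    w 0 * deriv w 0 * (Real.sin (2 * φ) : ℂ)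
      = -((r * Real.sin (3 * φ) * ∫ t in (0:ℝ)..1, ‖deriv w (α * t)‖ ^ 2 : ℝ) : ℂ) := by
  have key := lommel_integral_of_deriv_eq_zero hw hairy hreal hz hz'
  rw [hα, pow_sub_conj_pow_polar, pow_sub_conj_pow_polar, ← hα] at key
  have hr0 : (r : ℂ) ≠ 0 := ofReal_ne_zero.mpr hr.ne'
  apply mul_left_cancel₀ (by simp [hr0] : (2 * I * r ^ 2 : ℂ) ≠ 0)
  push_cast at key ⊢
  linear_combination key

theorem lommel_integral_deriv_zeros (w : ℂ → ℂ)
    (hw : Differentiable ℂ w) (hw' : Differentiable ℂ (deriv w))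
    (hairy : ∀ z : ℂ, deriv (deriv w) z = z * w z)
    (hreal : ∀ x : ℂ, w (starRingEnd ℂ x) = starRingEnd ℂ (w x))
    (r φ : ℝ) (hr : 0 < r) (hφ : 0 < φ ∧ φ < Real.pi)
    (α : ℂ) (hα : α = r * Complex.exp (φ * Complex.I))
    (hz : deriv w α = 0) (hz' : deriv w (starRingEnd ℂ α) = 0) :
    w 0 * deriv w 0 * (Real.sin (2 * φ) : ℂ)
      = -((r * Real.sin (3 * φ) * ∫ t in (0:ℝ)..1, ‖deriv w (α * t)‖ ^ 2 : ℝ) : ℂ) :=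
  lommel_integral_deriv_zeros_general w hw hairy hreal r φ hr α hα hz hz'
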